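/- Let G = (A, B, E) be a convex bipartite graph with orderings <_A on A and <_B on B as above. Then for each vertex a ∈ A, the set of <_A-later neighbors N_{G²}(a) ∩ {a' ∈ A : a <_A a'} is a clique in G², and for each b ∈ B, the set of <_B-later neighbors N_{G²}(b) ∩ {b' ∈ B : b <_B b'} is a clique in G². -/

import Mathlib

/-- The square of a simple graph: two distinct vertices are adjacent iff
their distance in `G` is at most `2`. -/
def SimpleGraph.square {V : Type*} (G : SimpleGraph V) : SimpleGraph V where
  Adj u v := u ≠ v ∧ (G.Adj u v ∨ ∃ w, G.Adj u w ∧ G.Adj w v)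
  symm := ⟨fun u v => by
    rintro ⟨huv, h | ⟨w, h1, h2⟩⟩
    · exact ⟨huv.symm, Or.inl h.symm⟩
    · exact ⟨huv.symm, Or.inr ⟨w, h2.symm, h1.symm⟩⟩⟩
  loopless := ⟨fun v => by simp⟩


/-- `A, B` form a bipartition of the graph `G`: they partition the vertex set and
every edge goes between `A` and `B`. -/
def SimpleGraph.IsBipartitionOf {V : Type*} (G : SimpleGraph V) (A B : Set V) : Prop :=
  (∀ v, v ∈ A ∨ v ∈ B) ∧ Disjoint A B ∧
    ∀ ⦃u v⦄, G.Adj u v → (u ∈ A ∧ v ∈ B) ∨ (u ∈ B ∧ v ∈ A)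

/-- `ordB` is a convexity ordering of the part `B`: it is injective on `B` and for each
`a ∈ A` the neighborhood `N_G(a)` is a consecutive (convex) set with respect to it. -/
def SimpleGraph.IsConvexityOrder {V : Type*} (G : SimpleGraph V) (A B : Set V)
    (ordB : V → ℕ) : Prop :=
  Set.InjOn ordB B ∧
    ∀ a ∈ A, ∀ b₁ ∈ B, ∀ b₂ ∈ B, ∀ b₃ ∈ B, G.Adj a b₁ → G.Adj a b₃ →
      ordB b₁ ≤ ordB b₂ → ordB b₂ ≤ ordB b₃ → G.Adj a b₂

/-- `ordA` orders `A` by the right endpoints of the neighborhood intervals in `B`: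
it is injective on `A`, and whenever `ordA a ≤ ordA a'`, the right endpoint of the
interval of `a` is at most that of `a'` (i.e. every `G`-neighbor of `a` is `≤_B`
some `G`-neighbor of `a'`). -/
def SimpleGraph.IsRightEndpointOrder {V : Type*} (G : SimpleGraph V) (A B : Set V)
    (ordA ordB : V → ℕ) : Prop :=
  Set.InjOn ordA A ∧
    ∀ a ∈ A, ∀ a' ∈ A, ordA a ≤ ordA a' → ∀ b ∈ B, G.Adj a b →
      ∃ b' ∈ B, G.Adj a' b' ∧ ordB b ≤ ordB b'

/-!
Let `x, y` be `<_A`-later `G²`-neighbours of `a ∈ A`, reached through common neighbours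
`b₁, b₂` of `a`, say `b₁ ≤_B b₂`. As `x` comes after `a`, the interval of `x` reaches at least
as far right as that of `a`, hence past `b₂`; since it also contains `b₁`, convexity makes `x`
adjacent to `b₂`. For `<_B`-later `G²`-neighbours `x ≤_B y` of `b ∈ B`, reached through
`a₁, a₂`, the interval of `a₂` contains `b` and `y`, hence also `x`.
-/

namespace SimpleGraph

variable {V : Type*} {G : SimpleGraph V} {A B : Set V} {u v w : V}

theorem square_adj_of_adj_of_adj (huv : u ≠ v) (huw : G.Adj u w) (hwv : G.Adj w v) :
    G.square.Adj u v :=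
  ⟨huv, Or.inr ⟨w, huw, hwv⟩⟩

namespace IsBipartitionOf

theorem symm (hbip : G.IsBipartitionOf A B) : G.IsBipartitionOf B A := by
  obtain ⟨hcover, hdisj, hedge⟩ := hbip
  exact ⟨fun v => (hcover v).symm, hdisj.symm, fun _ _ h => (hedge h).symm⟩

theorem mem_right_of_adj (hbip : G.IsBipartitionOf A B) (hu : u ∈ A) (h : G.Adj u w) :
    w ∈ B :=
  (hbip.2.2 h).elim And.right fun h' => absurd hu (Set.disjoint_right.mp hbip.2.1 h'.1)

theorem not_adj_of_mem_left (hbip : G.IsBipartitionOf A B) (hu : u ∈ A) (hv : v ∈ A) :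
    ¬ G.Adj u v :=
  fun h => Set.disjoint_left.mp hbip.2.1 hv (hbip.mem_right_of_adj hu h)

theorem exists_common_neighbor_of_square_adj (hbip : G.IsBipartitionOf A B) (hu : u ∈ A)
    (hv : v ∈ A) (h : G.square.Adj u v) : ∃ w ∈ B, G.Adj u w ∧ G.Adj w v := by
  obtain ⟨w, huw, hwv⟩ := h.2.resolve_left (hbip.not_adj_of_mem_left hu hv)
  exact ⟨w, hbip.mem_right_of_adj hu huw, huw, hwv⟩

end IsBipartitionOf

variable {ordA ordB : V → ℕ}

theorem IsRightEndpointOrder.adj_of_le (hconv : G.IsConvexityOrder A B ordB)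
    (hord : G.IsRightEndpointOrder A B ordA ordB) {a x b₁ b₂ : V} (ha : a ∈ A) (hx : x ∈ A)
    (hax : ordA a ≤ ordA x) (hb₁ : b₁ ∈ B) (hb₂ : b₂ ∈ B) (hxb₁ : G.Adj x b₁)
    (hab₂ : G.Adj a b₂) (hb₁₂ : ordB b₁ ≤ ordB b₂) : G.Adj x b₂ := by
  obtain ⟨b₃, hb₃, hxb₃, hb₂₃⟩ := hord.2 a ha x hx hax b₂ hb₂ hab₂
  exact hconv.2 x hx b₁ hb₁ b₂ hb₂ b₃ hb₃ hxb₁ hxb₃ hb₁₂ hb₂₃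

theorem isClique_square_later_neighbors_left (hbip : G.IsBipartitionOf A B)
    (hconv : G.IsConvexityOrder A B ordB) (hord : G.IsRightEndpointOrder A B ordA ordB)
    {a : V} (ha : a ∈ A) :
    G.square.IsClique {a' | a' ∈ A ∧ G.square.Adj a a' ∧ ordA a < ordA a'} := by
  rintro x ⟨hx, hax, hltx⟩ y ⟨hy, hay, hlty⟩ hxy
  obtain ⟨b₁, hb₁, hab₁, hb₁x⟩ := hbip.exists_common_neighbor_of_square_adj ha hx hax
  obtain ⟨b₂, hb₂, hab₂, hb₂y⟩ := hbip.exists_common_neighbor_of_square_adj ha hy hay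
  rcases le_total (ordB b₁) (ordB b₂) with h | h
  · have hxb₂ := hord.adj_of_le hconv ha hx hltx.le hb₁ hb₂ hb₁x.symm hab₂ h
    exact square_adj_of_adj_of_adj hxy hxb₂ hb₂y
  · have hyb₁ := hord.adj_of_le hconv ha hy hlty.le hb₂ hb₁ hb₂y.symm hab₁ h
    exact (square_adj_of_adj_of_adj hxy.symm hyb₁ hb₁x).symm

theorem isClique_square_later_neighbors_right (hbip : G.IsBipartitionOf A B)
    (hconv : G.IsConvexityOrder A B ordB) {b : V} (hb : b ∈ B) :
    G.square.IsClique {b' | b' ∈ B ∧ G.square.Adj b b' ∧ ordB b < ordB b'} := by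
  rintro x ⟨hx, hbx, hltx⟩ y ⟨hy, hby, hlty⟩ hxy
  obtain ⟨a₁, ha₁, hba₁, ha₁x⟩ := hbip.symm.exists_common_neighbor_of_square_adj hb hx hbx
  obtain ⟨a₂, ha₂, hba₂, ha₂y⟩ := hbip.symm.exists_common_neighbor_of_square_adj hb hy hby
  rcases le_total (ordB x) (ordB y) with h | h
  · have ha₂x := hconv.2 a₂ ha₂ b hb x hx y hy hba₂.symm ha₂y hltx.le h
    exact square_adj_of_adj_of_adj hxy ha₂x.symm ha₂y
  · have ha₁y := hconv.2 a₁ ha₁ b hb y hy x hx hba₁.symm ha₁x hlty.le h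
    exact square_adj_of_adj_of_adj hxy ha₁x.symm ha₁y

end SimpleGraph

/-- In a convex bipartite graph with orderings `<_A` and `<_B`, for each `a ∈ A` the
set of `G²`-neighbors of `a` in `A` coming later in `<_A` is a clique in `G²`, and
for each `b ∈ B` the set of `G²`-neighbors of `b` in `B` coming later in `<_B` is a
clique in `G²`. -/
theorem convex_bipartite_later_neighbors_clique {V : Type*} (G : SimpleGraph V)
    (A B : Set V) (ordA ordB : V → ℕ) (hbip : G.IsBipartitionOf A B)
    (hconv : G.IsConvexityOrder A B ordB)
    (hord : G.IsRightEndpointOrder A B ordA ordB) :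
    (∀ a ∈ A, G.square.IsClique
      {a' | a' ∈ A ∧ G.square.Adj a a' ∧ ordA a < ordA a'}) ∧
    (∀ b ∈ B, G.square.IsClique
      {b' | b' ∈ B ∧ G.square.Adj b b' ∧ ordB b < ordB b'}) :=
  ⟨fun _ ha => G.isClique_square_later_neighbors_left hbip hconv hord ha,
    fun _ hb => G.isClique_square_later_neighbors_right hbip hconv hb⟩
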